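/- arXiv:1001.0312 — 3 statements merged into one kernel-verified Lean document; each statement's English description precedes it below -/
import Mathlib

section
/- Corollary (recurrence from combinatorial telescoping for Watson's identity): Let n ≥ 1 be an integer and N a nonnegative integer, and write p_{n,k}(N) for the number of elements of P_{n,k} of weight N (with p_{n,k}(N) = 0 if N < 0). Then ∑_{k=0}^∞ (−1)^k p_{n,k}(N) = ∑_{k=0}^∞ (−1)^k p_{n,k}(N − n) + ∑_{k=0}^∞ (−1)^k p_{n−1,k}(N − (2n−1)); all sums over k have only finitely many nonzero terms. -/
/-- `P n k` is the set of pairs `(λ, μ)` of partitions such that `λ` has exactly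
`n - 2k` parts, every part of `λ` is at least `k` (and positive), no part of `λ`
equals `2k`, and every part of `μ` lies in `{1, …, k}`; it is empty when `n < 2k`. -/
def P (n k : ℕ) : Set (Multiset ℕ × Multiset ℕ) :=
  {p | p.1.card + 2 * k = n ∧ (∀ x ∈ p.1, k ≤ x ∧ 1 ≤ x ∧ x ≠ 2 * k) ∧
    ∀ x ∈ p.2, 1 ≤ x ∧ x ≤ k}

/-- The weight of an element of `P n k`: `k(5k-1)/2 + |λ| + |μ|`. -/
def wt (k : ℕ) (p : Multiset ℕ × Multiset ℕ) : ℕ :=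
  k * (5 * k - 1) / 2 + p.1.sum + p.2.sum

/-!
Every count is a coefficient of a power series in `ℤ⟦X⟧`. Let `M r` be the generating function
of partitions into parts `≤ r`, so that `(1 - X^(r+1)) M (r+1) = M r`. Partitions into exactly `m`
parts `≥ k` have generating function `X^(km) M m`, and removing a part `2k` shows that those
avoiding `2k` have `X^(km) (1 - X^k + X^(k+m)) M m`. Hence `P n k` has weight generating function
`A n k = X^(k(5k-1)/2 + k(n-2k)) (1 - X^k + X^(n-k)) M (n-2k) M k`, and a direct computation gives
`(1 - X^n) A n k = X^(2n-1) A (n-1) k + H n k + H n (k+1)`, where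
`H n k = X^(k(5k-1)/2 + k(n-2k)) (1 + X^(n-k)) (1 - X^k) M k M (n-2k)`.
In the alternating sum over `k` the `H` terms telescope, since `H n 0 = 0` and `H n k = 0` for
`2k > n`; comparing coefficients of `X^N` gives the recurrence.
-/

open PowerSeries

noncomputable def partitionSeries (p : Multiset ℕ → Prop) : ℤ⟦X⟧ :=
  PowerSeries.mk fun s => Nat.card {q : s.Partition // p q.parts}

lemma coeff_partitionSeries (p : Multiset ℕ → Prop) (s : ℕ) :
    coeff s (partitionSeries p) = Nat.card {q : s.Partition // p q.parts} :=
  coeff_mk _ _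

lemma partitionSeries_congr {p p' : Multiset ℕ → Prop}
    (h : ∀ l : Multiset ℕ, (∀ i ∈ l, 0 < i) → (p l ↔ p' l)) :
    partitionSeries p = partitionSeries p' := by
  ext s
  simp only [coeff_partitionSeries]
  exact congrArg _
    (Nat.card_congr (Equiv.subtypeEquivRight fun q => h q.parts fun _ => q.parts_pos))

lemma partitionSeries_eq_zero_eq_one : partitionSeries (· = 0) = 1 := by
  ext s
  rw [coeff_partitionSeries, coeff_one]
  split_ifs with hs
  · subst hs
    simp
  · have : IsEmpty {q : s.Partition // q.parts = 0} :=
      ⟨fun q => hs (by simpa [q.2] using q.1.parts_sum.symm)⟩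
    simp

lemma partitionSeries_eq_and_add_and_not (p q : Multiset ℕ → Prop) :
    partitionSeries p =
      partitionSeries (fun l => p l ∧ q l) + partitionSeries (fun l => p l ∧ ¬ q l) := by
  ext s
  classical
  simp only [map_add, coeff_partitionSeries, Nat.card_eq_fintype_card, Fintype.card_subtype]
  rw [← Finset.card_filter_add_card_filter_not (fun x : s.Partition => q x.parts)]
  simp [Finset.filter_filter]

lemma partitionSeries_and_mem (p : Multiset ℕ → Prop) {a : ℕ} (ha : 0 < a) :
    partitionSeries (fun l => p l ∧ a ∈ l) =
      X ^ a * partitionSeries (fun l => p (a ::ₘ l)) := by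
  ext s
  rw [coeff_X_pow_mul', coeff_partitionSeries]
  split_ifs with has
  · rw [coeff_partitionSeries]
    congr 1
    refine Nat.card_congr ((Equiv.subtypeEquivRight fun q => and_comm).trans
      ((Equiv.subtypeSubtypeEquivSubtypeInter (fun q : s.Partition => a ∈ q.parts)
        (fun q => p q.parts)).symm.trans
      (Equiv.subtypeEquiv (Nat.Partition.partitionWithPartEquiv ha has) fun q => ?_)))
    rw [Nat.Partition.partitionWithPartEquiv_apply_parts, Multiset.cons_erase q.2]
  · have : IsEmpty {q : s.Partition // p q.parts ∧ a ∈ q.parts} :=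
      ⟨fun q => has (Nat.Partition.le_of_mem_parts q.2.2)⟩
    simp

lemma Multiset.map_sub_map_add_cancel {l : Multiset ℕ} {j : ℕ} (h : ∀ x ∈ l, j ≤ x) :
    (l.map (· - j)).map (· + j) = l := by
  rw [Multiset.map_map]
  conv_rhs => rw [← Multiset.map_id l]
  exact Multiset.map_congr rfl fun x hx => Nat.sub_add_cancel (h x hx)

lemma Multiset.sum_map_add_const (l : Multiset ℕ) (j : ℕ) :
    (l.map (· + j)).sum = l.sum + Multiset.card l * j := by
  simp [Multiset.sum_map_add]

def addToPartsEquiv (m j t : ℕ) :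
    {r : t.Partition // Multiset.card r.parts = m} ≃
      {q : (t + j * m).Partition // Multiset.card q.parts = m ∧ ∀ x ∈ q.parts, j < x} where
  toFun r := ⟨⟨r.1.parts.map (· + j), fun hi => by
      obtain ⟨y, hy, rfl⟩ := Multiset.mem_map.1 hi
      exact Nat.add_pos_left (r.1.parts_pos hy) j, by
      rw [Multiset.sum_map_add_const, r.1.parts_sum, r.2, Nat.mul_comm]⟩, by
    refine ⟨by rw [Multiset.card_map, r.2], fun x hx => ?_⟩
    obtain ⟨y, hy, rfl⟩ := Multiset.mem_map.1 hx
    exact Nat.lt_add_of_pos_left (r.1.parts_pos hy)⟩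
  invFun q := ⟨⟨q.1.parts.map (· - j), fun hi => by
      obtain ⟨y, hy, rfl⟩ := Multiset.mem_map.1 hi
      exact Nat.sub_pos_of_lt (q.2.2 y hy), by
      have := Multiset.sum_map_add_const (q.1.parts.map (· - j)) j
      rw [Multiset.map_sub_map_add_cancel fun x hx => (q.2.2 x hx).le, q.1.parts_sum,
        Multiset.card_map, q.2.1, Nat.mul_comm m j] at this
      omega⟩, by rw [Multiset.card_map, q.2.1]⟩
  left_inv r := by ext1; ext1; simp [Multiset.map_map]
  right_inv q := by
    ext1; ext1; exact Multiset.map_sub_map_add_cancel fun x hx => (q.2.2 x hx).le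

lemma partitionSeries_card_eq_and_lt (m j : ℕ) :
    partitionSeries (fun l => Multiset.card l = m ∧ ∀ x ∈ l, j < x) =
      X ^ (j * m) * partitionSeries (fun l => Multiset.card l = m) := by
  ext s
  rw [coeff_X_pow_mul', coeff_partitionSeries]
  split_ifs with hs
  · obtain ⟨t, rfl⟩ := Nat.exists_eq_add_of_le' hs
    rw [Nat.add_sub_cancel, coeff_partitionSeries, Nat.card_congr (addToPartsEquiv m j t)]
  · have : IsEmpty {q : s.Partition // q.parts.card = m ∧ ∀ x ∈ q.parts, j < x} := by
      refine ⟨fun q => hs ?_⟩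
      have := Multiset.card_nsmul_le_sum fun x hx => (q.2.2 x hx).le
      rwa [smul_eq_mul, q.2.1, q.1.parts_sum, Nat.mul_comm] at this
    simp

open Finset in
lemma coeff_mul_partitionSeries (p q : Multiset ℕ → Prop) (W : ℕ) :
    coeff W (partitionSeries p * partitionSeries q) =
      Nat.card {x : Multiset ℕ × Multiset ℕ //
        (∀ i ∈ x.1, 0 < i) ∧ (∀ i ∈ x.2, 0 < i) ∧ p x.1 ∧ q x.2 ∧
          x.1.sum + x.2.sum = W} := by
  set T := {x : Multiset ℕ × Multiset ℕ //
    (∀ i ∈ x.1, 0 < i) ∧ (∀ i ∈ x.2, 0 < i) ∧ p x.1 ∧ q x.2 ∧ x.1.sum + x.2.sum = W}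
  let f : T → ℕ × ℕ := fun x => (x.1.1.sum, x.1.2.sum)
  let fiber (ij : antidiagonal W) : {x : T // f x = ij} ≃
      {a : ij.1.1.Partition // p a.parts} × {b : ij.1.2.Partition // q b.parts} :=
    { toFun := fun x =>
        (⟨⟨x.1.1.1, fun h => x.1.2.1 _ h, congrArg Prod.fst x.2⟩, x.1.2.2.2.1⟩,
        ⟨⟨x.1.1.2, fun h => x.1.2.2.1 _ h, congrArg Prod.snd x.2⟩, x.1.2.2.2.2.1⟩)
      invFun := fun ab => ⟨⟨(ab.1.1.parts, ab.2.1.parts), fun _ => ab.1.1.parts_pos,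
          fun _ => ab.2.1.parts_pos, ab.1.2, ab.2.2, by
            rw [ab.1.1.parts_sum, ab.2.1.parts_sum]; exact mem_antidiagonal.1 ij.2⟩,
        Prod.ext ab.1.1.parts_sum ab.2.1.parts_sum⟩
      left_inv := fun x => rfl
      right_inv := fun ab => rfl }
  have (ij : antidiagonal W) : Finite {x : T // f x = ij} :=
    Finite.of_equiv _ (fiber ij).symm
  rw [coeff_mul, ← Nat.card_congr (Equiv.sigmaSubtypeFiberEquiv f (· ∈ antidiagonal W)
    fun x => mem_antidiagonal.2 x.2.2.2.2.2), Nat.card_sigma, Nat.cast_sum,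
    ← Finset.sum_coe_sort (antidiagonal W)]
  refine Finset.sum_congr rfl fun ij _ => ?_
  rw [Nat.card_congr (fiber ij), Nat.card_prod, Nat.cast_mul, coeff_partitionSeries,
    coeff_partitionSeries]

noncomputable def boundedSeries (r : ℕ) : ℤ⟦X⟧ :=
  partitionSeries fun l => ∀ x ∈ l, x ≤ r

lemma boundedSeries_zero : boundedSeries 0 = 1 := by
  rw [boundedSeries, ← partitionSeries_eq_zero_eq_one]
  refine partitionSeries_congr fun l hl => ⟨fun h => ?_, fun h => by simp [h]⟩
  exact Multiset.eq_zero_of_forall_notMem fun x hx => by have := hl x hx; have := h x hx; omega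

lemma boundedSeries_succ (r : ℕ) :
    boundedSeries (r + 1) = boundedSeries r + X ^ (r + 1) * boundedSeries (r + 1) := by
  unfold boundedSeries
  conv_lhs => rw [partitionSeries_eq_and_add_and_not _ (fun l => r + 1 ∈ l),
    partitionSeries_and_mem _ r.succ_pos, add_comm]
  congr 1
  · refine partitionSeries_congr fun l _ =>
      ⟨fun h x hx => ?_, fun h => ⟨fun x hx => ?_, ?_⟩⟩
    · have := h.1 x hx
      have : x ≠ r + 1 := fun hxr => h.2 (hxr ▸ hx)
      omega
    · have := h x hx
      omega
    · intro hr
      have := h _ hr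
      omega
  · exact congrArg _ (partitionSeries_congr fun l _ => by simp)

lemma one_sub_X_pow_mul_boundedSeries (r : ℕ) :
    (1 - X ^ (r + 1)) * boundedSeries (r + 1) = boundedSeries r := by
  linear_combination boundedSeries_succ r

lemma one_sub_X_pow_ne_zero (m : ℕ) : (1 - X ^ (m + 1) : ℤ⟦X⟧) ≠ 0 := fun h => by
  simpa using congrArg constantCoeff h

lemma partitionSeries_card_eq (m : ℕ) :
    partitionSeries (fun l => Multiset.card l = m) = X ^ m * boundedSeries m := by
  induction m with
  | zero =>
    rw [boundedSeries_zero, pow_zero, one_mul, ← partitionSeries_eq_zero_eq_one]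
    exact partitionSeries_congr fun l _ => Multiset.card_eq_zero
  | succ m ih =>
    have split : partitionSeries (fun l => Multiset.card l = m + 1) =
        X * partitionSeries (fun l => Multiset.card l = m) +
          X ^ (1 * (m + 1)) * partitionSeries (fun l => Multiset.card l = m + 1) := by
      conv_lhs => rw [partitionSeries_eq_and_add_and_not _ (fun l => 1 ∈ l),
        partitionSeries_and_mem _ one_pos, pow_one]
      rw [← partitionSeries_card_eq_and_lt]
      congr 1
      · exact congrArg _ (partitionSeries_congr fun l _ => by simp)
      · refine partitionSeries_congr fun l hl =>
          and_congr_right fun _ => ⟨fun h x hx => ?_, ?_⟩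
        · have := hl x hx
          have : x ≠ 1 := fun hx1 => h (hx1 ▸ hx)
          omega
        · intro h h1
          exact lt_irrefl _ (h 1 h1)
    refine mul_left_cancel₀ (one_sub_X_pow_ne_zero m) ?_
    linear_combination split + X * ih - X ^ (m + 1) * one_sub_X_pow_mul_boundedSeries m

lemma partitionSeries_card_eq_and_le (m : ℕ) {k : ℕ} (hk : 0 < k) :
    partitionSeries (fun l => Multiset.card l = m ∧ ∀ x ∈ l, k ≤ x) =
      X ^ (k * m) * boundedSeries m := by
  obtain ⟨j, rfl⟩ := Nat.exists_eq_add_one_of_ne_zero hk.ne'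
  rw [show (j + 1) * m = j * m + m by ring, pow_add, mul_assoc, ← partitionSeries_card_eq,
    ← partitionSeries_card_eq_and_lt]
  rfl

noncomputable def avoidingSeries (m k : ℕ) : ℤ⟦X⟧ :=
  partitionSeries fun l => Multiset.card l = m ∧ ∀ x ∈ l, k ≤ x ∧ x ≠ 2 * k

lemma avoidingSeries_eq (m k : ℕ) :
    avoidingSeries m k = X ^ (k * m) * (1 - X ^ k + X ^ (k + m)) * boundedSeries m := by
  rcases m with _ | m
  · simp only [boundedSeries_zero, mul_zero, pow_zero, add_zero, sub_add_cancel, mul_one]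
    rw [avoidingSeries, ← partitionSeries_eq_zero_eq_one]
    exact partitionSeries_congr fun l _ =>
      ⟨fun h => Multiset.card_eq_zero.1 h.1, by rintro rfl; simp⟩
  rcases Nat.eq_zero_or_pos k with rfl | hk
  · rw [avoidingSeries, partitionSeries_congr (p' := fun l => Multiset.card l = m + 1),
      partitionSeries_card_eq]
    · ring
    · exact fun l hl => and_iff_left fun x hx => ⟨x.zero_le, (hl x hx).ne'⟩
  have split := partitionSeries_eq_and_add_and_not
    (fun l => Multiset.card l = m + 1 ∧ ∀ x ∈ l, k ≤ x) (fun l => 2 * k ∈ l)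
  rw [partitionSeries_and_mem _ (by omega : 0 < 2 * k), partitionSeries_card_eq_and_le _ hk,
    partitionSeries_congr (p' := fun l => Multiset.card l = m ∧ ∀ x ∈ l, k ≤ x),
    partitionSeries_card_eq_and_le _ hk] at split
  · rw [avoidingSeries, partitionSeries_congr (p' := fun l =>
      (Multiset.card l = m + 1 ∧ ∀ x ∈ l, k ≤ x) ∧ 2 * k ∉ l)]
    · linear_combination -split + X ^ (2 * k) * X ^ (k * m) * one_sub_X_pow_mul_boundedSeries m
    · exact fun l _ =>
        ⟨fun ⟨hc, h⟩ => ⟨⟨hc, fun x hx => (h x hx).1⟩, fun hm => (h _ hm).2 rfl⟩,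
          fun ⟨⟨hc, h⟩, hm⟩ => ⟨hc, fun x hx => ⟨h x hx, fun e => hm (e ▸ hx)⟩⟩⟩
  · intro l _
    simp [show k ≤ 2 * k by omega]

def weightOffset (k : ℕ) : ℕ := k * (5 * k - 1) / 2

lemma weightOffset_succ (k : ℕ) : weightOffset (k + 1) = weightOffset k + (5 * k + 2) := by
  have h : (k + 1) * (5 * (k + 1) - 1) = k * (5 * k - 1) + 2 * (5 * k + 2) := by
    rcases k with _ | k
    · rfl
    · rw [show 5 * (k + 1 + 1) - 1 = 5 * k + 9 by omega,
        show 5 * (k + 1) - 1 = 5 * k + 4 by omega]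
      ring
  rw [weightOffset, weightOffset, h, Nat.add_mul_div_left _ _ two_pos]

noncomputable def weightSeries (n k : ℕ) : ℤ⟦X⟧ :=
  if 2 * k ≤ n then X ^ weightOffset k * avoidingSeries (n - 2 * k) k * boundedSeries k else 0

noncomputable def telescopingTerm (n k : ℕ) : ℤ⟦X⟧ :=
  if 2 * k ≤ n then
    X ^ (weightOffset k + k * (n - 2 * k)) * (1 + X ^ (n - k)) * (1 - X ^ k) *
      boundedSeries k * boundedSeries (n - 2 * k)
  else 0

lemma weightSeries_eq_zero {n k : ℕ} (h : n < 2 * k) : weightSeries n k = 0 :=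
  if_neg (by omega)

lemma telescopingTerm_eq_zero {n k : ℕ} (h : n < 2 * k) : telescopingTerm n k = 0 :=
  if_neg (by omega)

lemma weightSeries_add_two_mul (m k : ℕ) :
    weightSeries (m + 2 * k) k =
      X ^ (weightOffset k + k * m) * (1 - X ^ k + X ^ (k + m)) *
        boundedSeries m * boundedSeries k := by
  rw [weightSeries, if_pos (by omega), Nat.add_sub_cancel, avoidingSeries_eq, pow_add]
  ring

lemma telescopingTerm_add_two_mul (m k : ℕ) :
    telescopingTerm (m + 2 * k) k =
      X ^ (weightOffset k + k * m) * (1 + X ^ (m + k)) * (1 - X ^ k) *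
        boundedSeries k * boundedSeries m := by
  rw [telescopingTerm, if_pos (by omega), Nat.add_sub_cancel,
    show m + 2 * k - k = m + k by omega]

lemma one_sub_X_pow_mul_weightSeries {n : ℕ} (hn : 1 ≤ n) (k : ℕ) :
    (1 - X ^ n) * weightSeries n k =
      X ^ (2 * n - 1) * weightSeries (n - 1) k +
        telescopingTerm n k + telescopingTerm n (k + 1) := by
  rcases lt_or_ge n (2 * k) with h | h
  · rw [weightSeries_eq_zero h, weightSeries_eq_zero (by omega), telescopingTerm_eq_zero h,
      telescopingTerm_eq_zero (by omega)]
    ring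
  obtain ⟨m, rfl⟩ := Nat.exists_eq_add_of_le' h
  rcases m with _ | _ | j
  · rw [weightSeries_eq_zero (n := 0 + 2 * k - 1) (by omega),
      telescopingTerm_eq_zero (k := k + 1) (by omega), weightSeries_add_two_mul,
      telescopingTerm_add_two_mul, boundedSeries_zero]
    ring
  · rw [telescopingTerm_eq_zero (k := k + 1) (by omega),
      show 0 + 1 + 2 * k - 1 = 0 + 2 * k by omega,
      weightSeries_add_two_mul (0 + 1), weightSeries_add_two_mul 0, telescopingTerm_add_two_mul,
      show 2 * (0 + 1 + 2 * k) - 1 = 4 * k + 1 by omega,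
      ← one_sub_X_pow_mul_boundedSeries 0]
    ring
  · rw [show j + 1 + 1 + 2 * k - 1 = j + 1 + 2 * k by omega,
      weightSeries_add_two_mul (j + 1 + 1), weightSeries_add_two_mul (j + 1),
      telescopingTerm_add_two_mul (j + 1 + 1), show j + 1 + 1 + 2 * k = j + 2 * (k + 1) by ring,
      telescopingTerm_add_two_mul j, weightOffset_succ,
      show 2 * (j + 2 * (k + 1)) - 1 = 2 * j + 4 * k + 3 by omega,
      ← one_sub_X_pow_mul_boundedSeries k, ← one_sub_X_pow_mul_boundedSeries j,
      ← one_sub_X_pow_mul_boundedSeries (j + 1)]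
    ring

lemma telescopingTerm_zero (n : ℕ) : telescopingTerm n 0 = 0 := by
  simp [telescopingTerm]

noncomputable def alternatingSeries (n : ℕ) : ℤ⟦X⟧ :=
  ∑ k ∈ Finset.range (n + 1), (-1) ^ k * weightSeries n k

lemma alternatingSeries_eq {n : ℕ} (hn : 1 ≤ n) :
    alternatingSeries n =
      X ^ n * alternatingSeries n + X ^ (2 * n - 1) * alternatingSeries (n - 1) := by
  have telescoped :
      (1 - X ^ n) * alternatingSeries n = X ^ (2 * n - 1) * alternatingSeries (n - 1) :=
    calc (1 - X ^ n) * alternatingSeries n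
        = ∑ k ∈ Finset.range (n + 1), (X ^ (2 * n - 1) * ((-1) ^ k * weightSeries (n - 1) k) +
            ((-1) ^ k * telescopingTerm n k - (-1) ^ (k + 1) * telescopingTerm n (k + 1))) := by
          rw [alternatingSeries, Finset.mul_sum]
          refine Finset.sum_congr rfl fun k _ => ?_
          linear_combination (-1) ^ k * one_sub_X_pow_mul_weightSeries hn k
      _ = X ^ (2 * n - 1) * alternatingSeries (n - 1) := by
          rw [Finset.sum_add_distrib, Finset.sum_range_sub', telescopingTerm_zero,
            telescopingTerm_eq_zero (by omega), ← Finset.mul_sum, Finset.sum_range_succ,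
            weightSeries_eq_zero (by omega), alternatingSeries, Nat.sub_add_cancel hn]
          ring
  linear_combination telescoped

lemma card_eq_coeff_weightSeries (n k N : ℕ) :
    (Nat.card {p | p ∈ P n k ∧ wt k p = N} : ℤ) = coeff N (weightSeries n k) := by
  unfold weightSeries
  split_ifs with hk
  · rw [mul_assoc, coeff_X_pow_mul']
    split_ifs with hN
    · rw [avoidingSeries, boundedSeries, coeff_mul_partitionSeries]
      congr 1
      refine Nat.card_congr (Equiv.subtypeEquivRight fun p => ?_)
      change (_ ∧ _ ∧ _) ∧ weightOffset k + _ + _ = N ↔ _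
      constructor
      · rintro ⟨⟨hc, hl, hm⟩, hw⟩
        exact ⟨fun i hi => (hl i hi).2.1, fun i hi => (hm i hi).1,
          ⟨by omega, fun i hi => ⟨(hl i hi).1, (hl i hi).2.2⟩⟩, fun i hi => (hm i hi).2,
          by omega⟩
      · rintro ⟨hl₁, hm₁, ⟨hc, hl⟩, hm, hs⟩
        exact ⟨⟨by omega, fun i hi => ⟨(hl i hi).1, hl₁ i hi, (hl i hi).2⟩,
          fun i hi => ⟨hm₁ i hi, hm i hi⟩⟩, by omega⟩
    · have : IsEmpty {p | p ∈ P n k ∧ wt k p = N} :=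
        ⟨fun p => hN (by have := p.2.2; unfold wt at this; unfold weightOffset; omega)⟩
      simp
  · have : IsEmpty {p | p ∈ P n k ∧ wt k p = N} :=
      ⟨fun p => hk (by have := p.2.1.1; omega)⟩
    simp

lemma card_add_eq_coeff_weightSeries (n k g N : ℕ) :
    (Nat.card {p | p ∈ P n k ∧ wt k p + g = N} : ℤ) = coeff N (X ^ g * weightSeries n k) := by
  rw [coeff_X_pow_mul']
  split_ifs with hg
  · rw [← card_eq_coeff_weightSeries]
    congr 3
    exact Set.ext fun p => and_congr_right fun _ => ⟨fun h => by omega, fun h => by omega⟩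
  · have : IsEmpty {p | p ∈ P n k ∧ wt k p + g = N} :=
      ⟨fun p => hg (by have := p.2.2; omega)⟩
    simp

lemma tsum_card_eq_coeff_alternatingSeries (n g N : ℕ) :
    ∑' k : ℕ, ((-1 : ℤ) ^ k * Nat.card {p | p ∈ P n k ∧ wt k p + g = N}) =
      coeff N (X ^ g * alternatingSeries n) := by
  rw [tsum_eq_sum (s := Finset.range (n + 1)), alternatingSeries, Finset.mul_sum, map_sum]
  · refine Finset.sum_congr rfl fun k _ => ?_
    rw [card_add_eq_coeff_weightSeries, mul_left_comm,
      show (-1 : ℤ⟦X⟧) ^ k = C ((-1 : ℤ) ^ k) by simp, coeff_C_mul]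
  · intro k hk
    rw [card_add_eq_coeff_weightSeries, weightSeries_eq_zero (by simp at hk; omega)]
    simp

/-- Recurrence derived from combinatorial telescoping for Watson's identity. -/
theorem watson_recurrence (n N : ℕ) (hn : 1 ≤ n) :
    ∑' k : ℕ, ((-1 : ℤ) ^ k * Nat.card {p | p ∈ P n k ∧ wt k p = N}) =
      (∑' k : ℕ, ((-1 : ℤ) ^ k * Nat.card {p | p ∈ P n k ∧ wt k p + n = N})) +
      ∑' k : ℕ, ((-1 : ℤ) ^ k *
        Nat.card {p | p ∈ P (n - 1) k ∧ wt k p + (2 * n - 1) = N}) := by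
  have unshifted := tsum_card_eq_coeff_alternatingSeries n 0 N
  simp only [add_zero, pow_zero, one_mul] at unshifted
  rw [unshifted, tsum_card_eq_coeff_alternatingSeries, tsum_card_eq_coeff_alternatingSeries,
    ← map_add, ← alternatingSeries_eq hn]
end

section
/- Closed form from the recurrence: Let n ≥ 0 be an integer and N a nonnegative integer, and write p_{n,k}(N) for the number of elements of P_{n,k} of weight N. Then ∑_{k=0}^∞ (−1)^k p_{n,k}(N) equals the number of partitions of N − n² into at most n parts (and equals 0 if N < n²). -/
/-!
Write `T n k = ∑_N p_{n,k}(N) q^N` and `1/(q)_m` for the series counting multisets of `m`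
naturals by their sum (equivalently partitions into at most `m` parts, or into parts `≤ m`).
Lowering the parts of `λ` by `k` identifies the `λ`'s of `P (m + 2k) k` with multisets of `m`
naturals avoiding `k`, whence
`T (m + 2k) k = q^(k(5k-1)/2 + km) (1 - q^k + q^(m+k)) / ((q)_m (q)_k)`.
For `S n = ∑_k (-1)^k T n k` the termwise identity
`(1 - q^(n+1)) T (n+1) k - q^(2n+1) T n k = E (n+1) k + E (n+1) (k+1)`, where
`E n k = q^(k(5k-1)/2 + k(n-2k)) (1 + q^(n-k)) / ((q)_(k-1) (q)_(n-2k))`, telescopes to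
`(1 - q^(n+1)) S (n+1) = q^(2n+1) S n`, whence `S n = q^(n²) / (q)_n` by induction.
-/

open PowerSeries Finset.HasAntidiagonal

namespace Watson

section GenFun

variable {α β : Type*}

-- `Nat.card` of an infinite fibre is `0`, so the lemmas below assume `FiniteFibres`.
noncomputable def genFun (w : α → ℕ) (s : Set α) : ℤ⟦X⟧ :=
  mk fun N => Nat.card {a | a ∈ s ∧ w a = N}

def FiniteFibres (w : α → ℕ) (s : Set α) : Prop :=
  ∀ N, {a | a ∈ s ∧ w a = N}.Finite

lemma coeff_genFun (w : α → ℕ) (s : Set α) (N : ℕ) :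
    coeff N (genFun w s) = Nat.card {a | a ∈ s ∧ w a = N} :=
  coeff_mk _ _

lemma genFun_empty (w : α → ℕ) : genFun w ∅ = 0 := by
  ext N
  simp [coeff_genFun]

lemma genFun_split {w : α → ℕ} {s : Set α} (hs : FiniteFibres w s) (p : α → Prop) :
    genFun w s = genFun w {a | a ∈ s ∧ p a} + genFun w {a | a ∈ s ∧ ¬ p a} := by
  ext N
  simp only [map_add, coeff_genFun, Nat.card_coe_set_eq]
  rw [← Set.ncard_inter_add_ncard_sdiff_eq_ncard _ {a | p a} (hs N)]
  push_cast
  congr 3 <;> ext a <;> simp [and_right_comm]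

lemma genFun_image {f : α → β} {w : α → ℕ} {w' : β → ℕ} {c : ℕ} {s : Set α}
    (hf : Set.InjOn f s) (hw : ∀ a ∈ s, w' (f a) = w a + c) :
    genFun w' (f '' s) = X ^ c * genFun w s := by
  ext N
  rw [coeff_X_pow_mul', coeff_genFun]
  split_ifs with hc
  · have hfib : {b | b ∈ f '' s ∧ w' b = N} = f '' {a | a ∈ s ∧ w a = N - c} := by
      ext b
      constructor
      · rintro ⟨⟨a, ha, rfl⟩, hN⟩
        exact ⟨a, ⟨ha, by have := hw a ha; omega⟩, rfl⟩
      · rintro ⟨a, ⟨ha, hN⟩, rfl⟩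
        exact ⟨Set.mem_image_of_mem f ha, by have := hw a ha; omega⟩
    rw [hfib, Nat.card_image_of_injOn (hf.mono fun a ha => ha.1), coeff_genFun]
  · have hfib : {b | b ∈ f '' s ∧ w' b = N} = ∅ := by
      ext b
      simp only [Set.mem_ofPred_eq, Set.mem_empty_iff_false, iff_false, not_and]
      rintro ⟨a, ha, rfl⟩
      have := hw a ha
      omega
    rw [hfib]
    simp

lemma genFun_add_const (w : α → ℕ) (c : ℕ) (s : Set α) :
    genFun (fun a => w a + c) s = X ^ c * genFun w s := by
  simpa using genFun_image (f := id) (Set.injOn_id s) (fun a _ => rfl) (w := w) (c := c)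

lemma genFun_prod {w₁ : α → ℕ} {w₂ : β → ℕ} {s : Set α} {t : Set β}
    (hs : FiniteFibres w₁ s) (ht : FiniteFibres w₂ t) :
    genFun (fun p => w₁ p.1 + w₂ p.2) (s ×ˢ t) = genFun w₁ s * genFun w₂ t := by
  ext N
  simp only [coeff_mul, coeff_genFun]
  have := fun i => (hs i).to_subtype
  have := fun j => (ht j).to_subtype
  let e : {p | p ∈ s ×ˢ t ∧ w₁ p.1 + w₂ p.2 = N} ≃ Σ ij : antidiagonal N,
      {a | a ∈ s ∧ w₁ a = ij.1.1} × {b | b ∈ t ∧ w₂ b = ij.1.2} :=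
    { toFun := fun p => ⟨⟨(w₁ p.1.1, w₂ p.1.2), mem_antidiagonal.2 p.2.2⟩,
        ⟨p.1.1, p.2.1.1, rfl⟩, ⟨p.1.2, p.2.1.2, rfl⟩⟩
      invFun := fun x => ⟨(x.2.1, x.2.2), ⟨x.2.1.2.1, x.2.2.2.1⟩, by
        rw [x.2.1.2.2, x.2.2.2.2]
        exact mem_antidiagonal.1 x.1.2⟩
      left_inv := fun _ => rfl
      right_inv := by
        rintro ⟨⟨⟨i, j⟩, hij⟩, ⟨a, ha, hai⟩, ⟨b, hb, hbj⟩⟩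
        dsimp only at hai hbj
        subst hai hbj
        rfl }
  rw [Nat.card_congr e, Nat.card_sigma, ← Finset.sum_coe_sort (antidiagonal N)]
  push_cast
  simp [Nat.card_prod]

end GenFun

open Multiset

lemma finiteFibres_of_card_le {s : Set (Multiset ℕ)} {m : ℕ} (h : ∀ l ∈ s, card l ≤ m) :
    FiniteFibres Multiset.sum s := by
  classical
  intro N
  refine (Set.finite_Iic (m • range (N + 1))).subset ?_
  rintro l ⟨hl, rfl⟩
  rw [Set.mem_Iic, le_iff_count]
  intro x
  by_cases hx : x ∈ l
  · rw [count_nsmul, count_eq_one_of_mem (nodup_range _)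
      (mem_range.2 (Nat.lt_succ_of_le (le_sum_of_mem hx))), mul_one]
    exact (count_le_card x l).trans (h l hl)
  · simp [count_eq_zero_of_notMem hx]

lemma finiteFibres_of_pos {s : Set (Multiset ℕ)} (h : ∀ l ∈ s, ∀ x ∈ l, 0 < x) :
    FiniteFibres Multiset.sum s := fun N =>
  (finiteFibres_of_card_le (s := {l ∈ s | l.sum = N}) (m := N) fun l hl => by
    simpa [← hl.2] using card_nsmul_le_sum (h l hl.1)) N |>.subset fun l hl => ⟨hl, hl.2⟩

lemma genFun_eq_notMem_add_cons {s : Set (Multiset ℕ)} (hs : FiniteFibres Multiset.sum s)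
    (v : ℕ) :
    genFun Multiset.sum s =
      genFun Multiset.sum {l | l ∈ s ∧ v ∉ l} + X ^ v * genFun Multiset.sum {t | v ::ₘ t ∈ s} := by
  rw [genFun_split hs (fun l => v ∉ l), ← genFun_image (w := Multiset.sum) (w' := Multiset.sum)
    (fun _ _ _ _ h => (cons_inj_right v).1 h) (fun t _ => by rw [sum_cons, add_comm])]
  congr 2
  ext l
  simp only [Set.mem_ofPred_eq, not_not, Set.mem_image]
  constructor
  · rintro ⟨hl, hv⟩
    exact ⟨l.erase v, by rwa [cons_erase hv], cons_erase hv⟩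
  · rintro ⟨t, ht, rfl⟩
    exact ⟨ht, mem_cons_self v t⟩

lemma genFun_image_map_add {s : Set (Multiset ℕ)} {m : ℕ} (h : ∀ l ∈ s, card l = m) (c : ℕ) :
    genFun Multiset.sum ((map (· + c)) '' s) = X ^ (m * c) * genFun Multiset.sum s :=
  genFun_image (map_injective (add_left_injective c)).injOn fun l hl => by
    simp [Multiset.sum_map_add, h l hl]

lemma mem_image_map_add_iff {s : Set (Multiset ℕ)} {c : ℕ} {l : Multiset ℕ} :
    l ∈ (map (· + c)) '' s ↔ (∀ x ∈ l, c ≤ x) ∧ l.map (· - c) ∈ s := by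
  constructor
  · rintro ⟨t, ht, rfl⟩
    simpa [map_map, Function.comp_def] using ht
  · rintro ⟨hc, hl⟩
    refine ⟨_, hl, ?_⟩
    rw [map_map]
    conv_rhs => rw [← map_id l]
    exact map_congr rfl fun x hx => Nat.sub_add_cancel (hc x hx)

lemma genFun_sum_singleton_zero : genFun Multiset.sum {0} = 1 := by
  ext N
  have hfib : {a : Multiset ℕ | a ∈ ({0} : Set _) ∧ a.sum = N} = if N = 0 then {0} else ∅ := by
    ext a
    split_ifs with h
    · simp +contextual [h]
    · simp +contextual [Ne.symm h]
  rw [coeff_genFun, coeff_one, hfib]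
  split_ifs <;> simp

lemma one_sub_X_pow_succ_ne_zero (m : ℕ) : (1 - X ^ (m + 1) : ℤ⟦X⟧) ≠ 0 := fun h => by
  simpa using congrArg constantCoeff h

noncomputable def cardSeries (m : ℕ) : ℤ⟦X⟧ :=
  genFun Multiset.sum {l | card l = m}

lemma finiteFibres_card_eq (m : ℕ) : FiniteFibres Multiset.sum {l | card l = m} :=
  finiteFibres_of_card_le fun _ hl => hl.le

lemma cardSeries_zero : cardSeries 0 = 1 := by
  simp [cardSeries, card_eq_zero, genFun_sum_singleton_zero]

lemma one_sub_X_pow_mul_cardSeries_succ (m : ℕ) :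
    (1 - X ^ (m + 1)) * cardSeries (m + 1) = cardSeries m := by
  have h := genFun_eq_notMem_add_cons (finiteFibres_card_eq (m + 1)) 0
  have hpos : {l : Multiset ℕ | l ∈ {l | card l = m + 1} ∧ 0 ∉ l} =
      map (· + 1) '' {l | card l = m + 1} := by
    ext l
    rw [mem_image_map_add_iff]
    simp only [Set.mem_ofPred_eq, Nat.one_le_iff_ne_zero, card_map]
    grind
  have hzero : {t : Multiset ℕ | 0 ::ₘ t ∈ {l | card l = m + 1}} = {l | card l = m} := by
    ext t
    simp
  rw [hpos, hzero, genFun_image_map_add (s := {l | card l = m + 1}) (fun _ hl => hl), mul_one,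
    pow_zero, one_mul] at h
  rw [cardSeries, cardSeries]
  linear_combination h

lemma genFun_card_eq_notMem (m v : ℕ) :
    genFun Multiset.sum {l | card l = m ∧ v ∉ l} = (1 - X ^ v + X ^ (m + v)) * cardSeries m := by
  have h := genFun_eq_notMem_add_cons (finiteFibres_card_eq m) v
  rw [← cardSeries] at h
  cases m with
  | zero =>
    have hv : {t : Multiset ℕ | v ::ₘ t ∈ {l | card l = 0}} = ∅ := by
      ext t
      simp
    rw [hv, genFun_empty, cardSeries_zero] at h
    rw [cardSeries_zero]
    simpa using h.symm
  | succ m =>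
    have hv : {t : Multiset ℕ | v ::ₘ t ∈ {l | card l = m + 1}} = {l | card l = m} := by
      ext t
      simp
    rw [hv, ← cardSeries, ← one_sub_X_pow_mul_cardSeries_succ m] at h
    simp only [Set.mem_ofPred_eq] at h
    linear_combination -h

-- Conjugation of partitions, proved by comparing recurrences.
lemma genFun_forall_mem_Icc (k : ℕ) :
    genFun Multiset.sum {l | ∀ x ∈ l, 1 ≤ x ∧ x ≤ k} = cardSeries k := by
  induction k with
  | zero =>
    have h0 : {l : Multiset ℕ | ∀ x ∈ l, 1 ≤ x ∧ x ≤ 0} = {0} := by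
      ext l
      simp only [Set.mem_ofPred_eq, Set.mem_singleton_iff, eq_zero_iff_forall_notMem]
      grind
    rw [h0, genFun_sum_singleton_zero, cardSeries_zero]
  | succ k ih =>
    have h := genFun_eq_notMem_add_cons (finiteFibres_of_pos
      (s := {l | ∀ x ∈ l, 1 ≤ x ∧ x ≤ k + 1}) fun l hl x hx => (hl x hx).1) (k + 1)
    have hk : {l : Multiset ℕ | l ∈ {l | ∀ x ∈ l, 1 ≤ x ∧ x ≤ k + 1} ∧ k + 1 ∉ l} =
        {l | ∀ x ∈ l, 1 ≤ x ∧ x ≤ k} := by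
      ext l
      simp only [Set.mem_ofPred_eq]
      constructor
      · rintro ⟨h, hk⟩ x hx
        have : x ≠ k + 1 := by rintro rfl; exact hk hx
        have := h x hx
        omega
      · intro h
        exact ⟨fun x hx => ⟨(h x hx).1, by have := h x hx; omega⟩,
          fun hk => by have := h _ hk; omega⟩
    have hcons : {t : Multiset ℕ | (k + 1) ::ₘ t ∈ {l | ∀ x ∈ l, 1 ≤ x ∧ x ≤ k + 1}} =
        {l | ∀ x ∈ l, 1 ≤ x ∧ x ≤ k + 1} := by
      ext t
      simp
    rw [hk, hcons, ih, ← one_sub_X_pow_mul_cardSeries_succ] at h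
    exact mul_left_cancel₀ (one_sub_X_pow_succ_ne_zero k) (by linear_combination h)

lemma genFun_pos_card_le (m : ℕ) :
    genFun Multiset.sum {l | (∀ x ∈ l, 0 < x) ∧ card l ≤ m} = cardSeries m := by
  induction m with
  | zero =>
    have h0 : {l : Multiset ℕ | (∀ x ∈ l, 0 < x) ∧ card l ≤ 0} = {0} := by
      ext l
      simp +contextual [card_eq_zero]
    rw [h0, genFun_sum_singleton_zero, cardSeries_zero]
  | succ m ih =>
    have h := genFun_split (finiteFibres_of_card_le
      (s := {l | (∀ x ∈ l, 0 < x) ∧ card l ≤ m + 1}) fun _ hl => hl.2) (fun l => card l ≤ m)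
    have hle : {l : Multiset ℕ | l ∈ {l | (∀ x ∈ l, 0 < x) ∧ card l ≤ m + 1} ∧ card l ≤ m} =
        {l | (∀ x ∈ l, 0 < x) ∧ card l ≤ m} := by
      ext l
      simp only [Set.mem_ofPred_eq]
      grind
    have heq : {l : Multiset ℕ | l ∈ {l | (∀ x ∈ l, 0 < x) ∧ card l ≤ m + 1} ∧ ¬ card l ≤ m} =
        map (· + 1) '' {l | card l = m + 1} := by
      ext l
      rw [mem_image_map_add_iff]
      simp only [Set.mem_ofPred_eq, card_map]
      grind
    rw [hle, heq, ih, genFun_image_map_add (s := {l | card l = m + 1}) (fun _ hl => hl), mul_one,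
      ← cardSeries, ← one_sub_X_pow_mul_cardSeries_succ m] at h
    linear_combination h

lemma genFun_card_eq_forall_mem_le_ne (m k : ℕ) :
    genFun Multiset.sum {l | card l = m ∧ ∀ x ∈ l, k ≤ x ∧ 1 ≤ x ∧ x ≠ 2 * k} =
      X ^ (m * k) * ((1 - X ^ k + X ^ (m + k)) * cardSeries m) := by
  rw [← genFun_card_eq_notMem,
    ← genFun_image_map_add (s := {l | card l = m ∧ k ∉ l}) (fun _ hl => hl.1)]
  congr 1
  ext l
  rw [mem_image_map_add_iff]
  simp only [Set.mem_ofPred_eq, card_map, mem_map, not_exists, not_and]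
  grind

lemma P_add_two_mul (m k : ℕ) :
    P (m + 2 * k) k =
      {l | card l = m ∧ ∀ x ∈ l, k ≤ x ∧ 1 ≤ x ∧ x ≠ 2 * k} ×ˢ {l | ∀ x ∈ l, 1 ≤ x ∧ x ≤ k} := by
  ext p
  simp [P, and_assoc]

lemma P_eq_empty_of_lt {n k : ℕ} (h : n < 2 * k) : P n k = ∅ := by
  ext p
  simp only [P, Set.mem_ofPred_eq, Set.mem_empty_iff_false, iff_false]
  omega

def wtOffset (k : ℕ) : ℕ := k * (5 * k - 1) / 2

lemma wtOffset_succ (k : ℕ) : wtOffset (k + 1) = wtOffset k + (5 * k + 2) := by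
  unfold wtOffset
  rw [← Nat.add_mul_div_right _ _ two_pos]
  congr 1
  rw [show 5 * (k + 1) - 1 = 5 * k + 4 by omega]
  cases k with
  | zero => rfl
  | succ k =>
    rw [show 5 * (k + 1) - 1 = 5 * k + 4 by omega]
    ring

lemma genFun_wt_P_add_two_mul (m k : ℕ) :
    genFun (wt k) (P (m + 2 * k) k) =
      X ^ (wtOffset k + k * m) * ((1 - X ^ k + X ^ (m + k)) * cardSeries m) * cardSeries k := by
  have hwt : wt k = fun p => (p.1.sum + p.2.sum) + wtOffset k := by
    funext p
    unfold wt wtOffset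
    ring
  rw [hwt, genFun_add_const, P_add_two_mul, genFun_prod
    (finiteFibres_of_card_le fun _ hl => hl.1.le)
    (finiteFibres_of_pos fun _ hl x hx => (hl x hx).1),
    genFun_card_eq_forall_mem_le_ne, genFun_forall_mem_Icc]
  ring

lemma genFun_wt_P_of_lt {n k : ℕ} (h : n < 2 * k) : genFun (wt k) (P n k) = 0 := by
  rw [P_eq_empty_of_lt h, genFun_empty]

-- `(1 - X ^ k) * cardSeries k` stands for `1/(q)_(k-1)` and vanishes at `k = 0`.
noncomputable def telescopeTerm (n k : ℕ) : ℤ⟦X⟧ :=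
  if 2 * k ≤ n then
    X ^ (wtOffset k + k * (n - 2 * k)) * (1 + X ^ (n - k)) * (1 - X ^ k) * cardSeries k *
      cardSeries (n - 2 * k)
  else 0

lemma telescopeTerm_add_two_mul (m k : ℕ) :
    telescopeTerm (m + 2 * k) k =
      X ^ (wtOffset k + k * m) * (1 + X ^ (m + k)) * (1 - X ^ k) * cardSeries k * cardSeries m := by
  rw [telescopeTerm, if_pos (by omega), Nat.add_sub_cancel, show m + 2 * k - k = m + k by omega]

lemma telescopeTerm_of_lt {n k : ℕ} (h : n < 2 * k) : telescopeTerm n k = 0 :=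
  if_neg (by omega)

lemma genFun_wt_P_succ_sub_eq_telescopeTerm (n k : ℕ) :
    (1 - X ^ (n + 1)) * genFun (wt k) (P (n + 1) k) - X ^ (2 * n + 1) * genFun (wt k) (P n k) =
      telescopeTerm (n + 1) k + telescopeTerm (n + 1) (k + 1) := by
  obtain h | ⟨m, hm⟩ : n + 1 < 2 * k ∨ ∃ m, n + 1 = m + 2 * k :=
    (lt_or_ge (n + 1) (2 * k)).imp id fun h => ⟨n + 1 - 2 * k, by omega⟩
  · rw [genFun_wt_P_of_lt h, genFun_wt_P_of_lt (by omega), telescopeTerm_of_lt h,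
      telescopeTerm_of_lt (by omega)]
    ring
  rw [hm]
  rcases m with _ | _ | m
  · rw [genFun_wt_P_of_lt (show n < 2 * k by omega), telescopeTerm_of_lt (k := k + 1) (by omega),
      genFun_wt_P_add_two_mul, telescopeTerm_add_two_mul, cardSeries_zero]
    ring
  · rw [show n = 0 + 2 * k by omega, genFun_wt_P_add_two_mul, genFun_wt_P_add_two_mul,
      telescopeTerm_add_two_mul, telescopeTerm_of_lt (by omega),
      ← one_sub_X_pow_mul_cardSeries_succ 0]
    ring
  · rw [show n = m + 1 + 2 * k by omega, genFun_wt_P_add_two_mul, genFun_wt_P_add_two_mul,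
      telescopeTerm_add_two_mul, show m + 1 + 1 + 2 * k = m + 2 * (k + 1) by ring,
      telescopeTerm_add_two_mul, wtOffset_succ, ← one_sub_X_pow_mul_cardSeries_succ k,
      ← one_sub_X_pow_mul_cardSeries_succ m, ← one_sub_X_pow_mul_cardSeries_succ (m + 1)]
    ring

noncomputable def altSum (n : ℕ) : ℤ⟦X⟧ :=
  ∑ k ∈ Finset.range (n + 1), (-1) ^ k * genFun (wt k) (P n k)

lemma one_sub_X_pow_mul_altSum_succ (n : ℕ) :
    (1 - X ^ (n + 1)) * altSum (n + 1) = X ^ (2 * n + 1) * altSum n := by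
  have hn : altSum n = ∑ k ∈ Finset.range (n + 2), (-1) ^ k * genFun (wt k) (P n k) := by
    rw [altSum, Finset.sum_range_succ _ (n + 1), genFun_wt_P_of_lt (by omega), mul_zero,
      add_zero]
  have hterm : ∀ k, (1 - X ^ (n + 1)) * ((-1) ^ k * genFun (wt k) (P (n + 1) k)) -
      X ^ (2 * n + 1) * ((-1) ^ k * genFun (wt k) (P n k)) =
      (-1) ^ k * telescopeTerm (n + 1) k - (-1) ^ (k + 1) * telescopeTerm (n + 1) (k + 1) :=
    fun k => by linear_combination (-1) ^ k * genFun_wt_P_succ_sub_eq_telescopeTerm n k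
  rw [hn, altSum, Finset.mul_sum, Finset.mul_sum, ← sub_eq_zero, ← Finset.sum_sub_distrib,
    Finset.sum_congr rfl fun k _ => hterm k, Finset.sum_range_sub',
    telescopeTerm_of_lt (k := n + 2) (by omega)]
  simp [telescopeTerm]

lemma altSum_eq_X_pow_mul_cardSeries (n : ℕ) : altSum n = X ^ (n ^ 2) * cardSeries n := by
  induction n with
  | zero =>
    have h := genFun_wt_P_add_two_mul 0 0
    simp only [mul_zero, add_zero] at h
    simp [altSum, h, wtOffset, cardSeries_zero]
  | succ n ih =>
    refine mul_left_cancel₀ (one_sub_X_pow_succ_ne_zero n) ?_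
    rw [one_sub_X_pow_mul_altSum_succ, ih, ← one_sub_X_pow_mul_cardSeries_succ n]
    ring

end Watson

open Watson in
/-- Closed form: the alternating count equals the number of partitions of `N - n²`
into at most `n` parts (and is `0` when `N < n²`). -/
theorem watson_closed_form (n N : ℕ) :
    ∑' k : ℕ, ((-1 : ℤ) ^ k * Nat.card {p | p ∈ P n k ∧ wt k p = N}) =
      Nat.card {lam : Multiset ℕ |
        (∀ x ∈ lam, 0 < x) ∧ lam.card ≤ n ∧ lam.sum + n ^ 2 = N} := by
  have hsupp : ∀ k ∉ Finset.range (n + 1),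
      (-1 : ℤ) ^ k * Nat.card {p | p ∈ P n k ∧ wt k p = N} = 0 := fun k hk => by
    simp [P_eq_empty_of_lt (by simp at hk; omega : n < 2 * k)]
  have hrhs : (Nat.card {lam : Multiset ℕ | (∀ x ∈ lam, 0 < x) ∧ lam.card ≤ n ∧
      lam.sum + n ^ 2 = N} : ℤ) = coeff N (X ^ (n ^ 2) * cardSeries n) := by
    rw [← genFun_pos_card_le, ← genFun_add_const, coeff_genFun]
    simp only [Set.mem_ofPred_eq, and_assoc]
  rw [tsum_eq_sum hsupp, hrhs, ← altSum_eq_X_pow_mul_cardSeries, altSum, map_sum]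
  refine Finset.sum_congr rfl fun k _ => ?_
  rw [← map_one (C (R := ℤ)), ← map_neg, ← map_pow, coeff_C_mul, coeff_genFun]
end

section
/- q-Zeilberger certificate for Watson's identity: Let q, a be complex numbers with |q| < 1 and a q^j ≠ 1 for every integer j ≥ 0. For each integer k ≥ 0 define F_k(a) = (−1)^k (1 − a q^{2k}) a^{2k} q^{k(5k−1)/2} / ((q;q)_k · (a q^k;q)_∞), and for k ≥ 1 define H_k(a) = (−1)^k (−1 − q^k + a q^{2k}) a^{2k} q^{k(5k−1)/2} / ((q;q)_{k−1} · (a q^k;q)_∞), with H_0(a) = 0. Then for every integer k ≥ 0, F_k(a) − F_k(aq) − a q · F_k(a q²) = H_{k+1}(a) − H_k(a). -/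
/-- The finite q-Pochhammer symbol `(a; q)_k = ∏_{i=0}^{k-1} (1 - a q^i)`. -/
noncomputable def qPoch (q a : ℂ) (k : ℕ) : ℂ := ∏ i ∈ Finset.range k, (1 - a * q ^ i)

/-- The infinite q-Pochhammer symbol `(a; q)_∞ = ∏_{i=0}^{∞} (1 - a q^i)`. -/
noncomputable def qPochInf (q a : ℂ) : ℂ := ∏' i : ℕ, (1 - a * q ^ i)

/-- The summand `F_k(a)` of the Watson series. -/
noncomputable def F (q a : ℂ) (k : ℕ) : ℂ :=
  (-1) ^ k * (1 - a * q ^ (2 * k)) * a ^ (2 * k) * q ^ (k * (5 * k - 1) / 2) /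
    (qPoch q q k * qPochInf q (a * q ^ k))

/-- The certificate `H_k(a)`, with `H_0(a) = 0`. -/
noncomputable def H (q a : ℂ) (k : ℕ) : ℂ :=
  if k = 0 then 0
  else (-1) ^ k * (-1 - q ^ k + a * q ^ (2 * k)) * a ^ (2 * k) * q ^ (k * (5 * k - 1) / 2) /
    (qPoch q q (k - 1) * qPochInf q (a * q ^ k))

/-! Every term of the identity is a multiple of the weight
`w_k(a) = (-1)^k a^{2k} q^{k(5k-1)/2} / ((q;q)_k (aq^k;q)_∞)`: `F_k(a) = (1 - a q^{2k}) w_k(a)` and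
`H_k(a) = (1 - q^k)(-1 - q^k + a q^{2k}) w_k(a)`, the factor `1 - q^0 = 0` accounting for `H_0 = 0`.
By `(x;q)_∞ = (1 - x)(xq;q)_∞`, the shifts `a ↦ aq` and `k ↦ k + 1` multiply `w_k(a)` by explicit
rational factors, after which the certificate identity is a polynomial identity in `a`, `q`, `q^k`. -/

section QPochhammer

variable {q : ℂ}

lemma multipliable_one_sub_mul_pow (hq : ‖q‖ < 1) (x : ℂ) :
    Multipliable fun i : ℕ ↦ 1 - x * q ^ i := by
  have hsum : Summable fun i : ℕ ↦ ‖-(x * q ^ i)‖ := by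
    simpa using (summable_geometric_of_lt_one (norm_nonneg q) hq).mul_left ‖x‖
  simpa only [sub_eq_add_neg] using multipliable_one_add_of_summable hsum

lemma qPochInf_eq_one_sub_mul (hq : ‖q‖ < 1) (x : ℂ) :
    qPochInf q x = (1 - x) * qPochInf q (x * q) := by
  have hshift : Multipliable fun i : ℕ ↦ 1 - x * q ^ (i + 1) := by
    simpa only [mul_assoc, ← pow_succ'] using multipliable_one_sub_mul_pow hq (x * q)
  rw [qPochInf, tprod_eq_zero_mul' (f := fun i ↦ 1 - x * q ^ i) hshift, pow_zero, mul_one, qPochInf]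
  simp only [pow_succ', mul_assoc]

lemma qPochInf_mul_pow_eq_one_sub_mul (hq : ‖q‖ < 1) (a : ℂ) (k : ℕ) :
    qPochInf q (a * q ^ k) = (1 - a * q ^ k) * qPochInf q (a * q ^ (k + 1)) := by
  rw [qPochInf_eq_one_sub_mul hq, mul_assoc, ← pow_succ]

lemma qPoch_succ (a : ℂ) (k : ℕ) : qPoch q a (k + 1) = qPoch q a k * (1 - a * q ^ k) :=
  Finset.prod_range_succ _ k

lemma one_sub_pow_ne_zero (hq : ‖q‖ < 1) {k : ℕ} (hk : k ≠ 0) : 1 - q ^ k ≠ 0 := by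
  rw [sub_ne_zero, ne_comm]
  refine fun h ↦ (pow_lt_one₀ (norm_nonneg q) hq hk).ne ?_
  rw [← norm_pow, h, norm_one]

end QPochhammer

lemma watson_exponent_succ (k : ℕ) :
    (k + 1) * (5 * (k + 1) - 1) / 2 = k * (5 * k - 1) / 2 + (5 * k + 2) := by
  have h : (k + 1) * (5 * (k + 1) - 1) = k * (5 * k - 1) + (5 * k + 2) * 2 := by
    cases k with
    | zero => rfl
    | succ m => rw [show 5 * (m + 1 + 1) - 1 = 5 * m + 9 by omega,
        show 5 * (m + 1) - 1 = 5 * m + 4 by omega]; ring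
  rw [h, Nat.add_mul_div_right _ _ two_pos]

noncomputable def watsonWeight (q a : ℂ) (k : ℕ) : ℂ :=
  (-1) ^ k * a ^ (2 * k) * q ^ (k * (5 * k - 1) / 2) / (qPoch q q k * qPochInf q (a * q ^ k))

section WatsonWeight

variable {q : ℂ}

lemma F_eq_mul_watsonWeight (a : ℂ) (k : ℕ) :
    F q a k = (1 - a * q ^ (2 * k)) * watsonWeight q a k := by
  rw [F, watsonWeight, ← mul_div_assoc]
  ring

lemma H_eq_mul_watsonWeight (hq : ‖q‖ < 1) (a : ℂ) (k : ℕ) :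
    H q a k = (1 - q ^ k) * (-1 - q ^ k + a * q ^ (2 * k)) * watsonWeight q a k := by
  rcases k with _ | m
  · simp [H]
  · have h := one_sub_pow_ne_zero hq m.succ_ne_zero
    rw [H, if_neg m.succ_ne_zero, watsonWeight, qPoch_succ, ← pow_succ', Nat.add_sub_cancel]
    field_simp

lemma watsonWeight_mul_q (hq : ‖q‖ < 1) {a : ℂ} {k : ℕ} (ha : a * q ^ k ≠ 1) :
    watsonWeight q (a * q) k = q ^ (2 * k) * (1 - a * q ^ k) * watsonWeight q a k := by
  have h : 1 - a * q ^ k ≠ 0 := sub_ne_zero.mpr (Ne.symm ha)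
  rw [watsonWeight, watsonWeight, mul_assoc a q, ← pow_succ', qPochInf_mul_pow_eq_one_sub_mul hq a k]
  field_simp
  ring

lemma watsonWeight_succ (hq : ‖q‖ < 1) {a : ℂ} {k : ℕ} (ha : a * q ^ k ≠ 1) :
    (1 - q ^ (k + 1)) * watsonWeight q a (k + 1) =
      -(a ^ 2 * q ^ (5 * k + 2)) * (1 - a * q ^ k) * watsonWeight q a k := by
  have h₁ : 1 - q ^ (k + 1) ≠ 0 := one_sub_pow_ne_zero hq k.succ_ne_zero
  have h₂ : 1 - a * q ^ k ≠ 0 := sub_ne_zero.mpr (Ne.symm ha)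
  rw [watsonWeight, watsonWeight, qPoch_succ, ← pow_succ', qPochInf_mul_pow_eq_one_sub_mul hq a k,
    watson_exponent_succ]
  field_simp
  ring

end WatsonWeight

/-- q-Zeilberger certificate for Watson's identity. -/
theorem watson_certificate (q a : ℂ) (hq : ‖q‖ < 1) (ha : ∀ j : ℕ, a * q ^ j ≠ 1) :
    ∀ k : ℕ, F q a k - F q (a * q) k - a * q * F q (a * q ^ 2) k =
      H q a (k + 1) - H q a k := by
  intro k
  have hW₁ := watsonWeight_mul_q hq (ha k)
  have hW₂ : watsonWeight q (a * q ^ 2) k =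
      q ^ (2 * k) * (1 - a * q ^ (k + 1)) * watsonWeight q (a * q) k := by
    rw [sq, ← mul_assoc, watsonWeight_mul_q hq (by rw [mul_assoc, ← pow_succ']; exact ha (k + 1))]
    ring
  have hV := watsonWeight_succ hq (ha k)
  simp only [F_eq_mul_watsonWeight, H_eq_mul_watsonWeight hq]
  rw [hW₂, hW₁]
  linear_combination (-(-1 - q ^ (k + 1) + a * q ^ (2 * (k + 1)))) * hV
end
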